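/- arXiv:2204.05298 — 5 statements merged into one kernel-verified Lean document; each statement's English description precedes it below -/
import Mathlib

section
/- Let f_{t,n}(θ) := θ·t^{θ−1}·n^{−θ}. Then for r ∈ {1,2} and θ with 2θ/r > 1, the scaled integral n^r ∫_1^n t^{1−r} [d^m f_{t,n}(θ)/dθ^m]^2 dt converges, as n → ∞, to r^{−2m+1}(2θ/r − 1)^{−2m−1} m (m + (2/r)(θ/r − 1)θ) Γ(2m − 1), for every integer m ≥ 1, where d^m f_{t,n}(θ)/dθ^m = f_{t,n}(θ)·ln^{m−1}(t/n)·(ln(t/n) + m/θ). -/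
/-!
Substituting `t = n e^{-u}` gives `log (t / n) = -u`, and all powers of `n` cancel, so the
scaled integral equals `∫_0^{log n} u^{2(m-1)} (θ u - m)^2 e^{-(2θ-r) u} du`. As `n → ∞` this
tends to the integral over `(0, ∞)`, which expands into three Gamma integrals
`∫_0^∞ u^j e^{-a u} du = j! / a^{j+1}`.
-/

open Filter Real MeasureTheory Set
open scoped Nat

lemma integral_pow_mul_exp_neg_mul_Ioi (j : ℕ) {a : ℝ} (ha : 0 < a) :
    ∫ u in Ioi 0, u ^ j * exp (-(a * u)) = j ! / a ^ (j + 1) := by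
  have h := integral_rpow_mul_exp_neg_mul_Ioi (a := j + 1) (by positivity) ha
  simp_rw [add_sub_cancel_right, rpow_natCast] at h
  rw [← Nat.cast_add_one, rpow_natCast, Nat.cast_add_one, Gamma_nat_eq_factorial, one_div,
    inv_pow] at h
  rw [h, div_eq_inv_mul]

lemma integrableOn_pow_mul_exp_neg_mul (j : ℕ) {a : ℝ} (ha : 0 < a) :
    IntegrableOn (fun u ↦ u ^ j * exp (-(a * u))) (Ioi 0) :=
  .of_integral_ne_zero (by rw [integral_pow_mul_exp_neg_mul_Ioi j ha]; positivity)

lemma integral_pow_mul_sq_mul_exp_neg_mul_Ioi (j : ℕ) (θ c : ℝ) {a : ℝ} (ha : 0 < a) :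
    ∫ u in Ioi 0, u ^ j * (θ * u - c) ^ 2 * exp (-(a * u)) =
      θ ^ 2 * (j + 2)! / a ^ (j + 3) - 2 * θ * c * (j + 1)! / a ^ (j + 2)
        + c ^ 2 * j ! / a ^ (j + 1) := by
  have h0 := (integrableOn_pow_mul_exp_neg_mul j ha).const_mul (c ^ 2)
  have h1 := (integrableOn_pow_mul_exp_neg_mul (j + 1) ha).const_mul (2 * θ * c)
  have h2 := (integrableOn_pow_mul_exp_neg_mul (j + 2) ha).const_mul (θ ^ 2)
  have hexpand : (fun u ↦ u ^ j * (θ * u - c) ^ 2 * exp (-(a * u))) = fun u ↦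
      θ ^ 2 * (u ^ (j + 2) * exp (-(a * u))) - 2 * θ * c * (u ^ (j + 1) * exp (-(a * u)))
        + c ^ 2 * (u ^ j * exp (-(a * u))) := by
    ext u; ring
  rw [hexpand, integral_add (h2.sub' h1) h0, integral_sub h2 h1, integral_const_mul,
    integral_const_mul, integral_const_mul, integral_pow_mul_exp_neg_mul_Ioi _ ha,
    integral_pow_mul_exp_neg_mul_Ioi _ ha, integral_pow_mul_exp_neg_mul_Ioi _ ha]
  ring

lemma integrableOn_pow_mul_sq_mul_exp_neg_mul (j : ℕ) (θ c : ℝ) {a : ℝ} (ha : 0 < a) :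
    IntegrableOn (fun u ↦ u ^ j * (θ * u - c) ^ 2 * exp (-(a * u))) (Ioi 0) := by
  have h0 := (integrableOn_pow_mul_exp_neg_mul j ha).const_mul (c ^ 2)
  have h1 := (integrableOn_pow_mul_exp_neg_mul (j + 1) ha).const_mul (2 * θ * c)
  have h2 := (integrableOn_pow_mul_exp_neg_mul (j + 2) ha).const_mul (θ ^ 2)
  exact IntegrableOn.congr_fun ((h2.sub' h1).fun_add h0) (fun u _ ↦ by ring) measurableSet_Ioi

lemma integral_one_exp_eq_integral_exp_sub {g : ℝ → ℝ} (hg : ContinuousOn g (Ioi 0)) (L : ℝ) :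
    ∫ t in (1 : ℝ)..exp L, g t = ∫ u in (0 : ℝ)..L, g (exp (L - u)) * exp (L - u) := by
  have hsub := intervalIntegral.integral_comp_mul_deriv' (a := L) (b := 0)
    (f := fun u ↦ exp (L - u)) (f' := fun u ↦ -exp (L - u)) (g := g)
    (fun u _ ↦ by simpa using ((hasDerivAt_id u).const_sub L).exp)
    (by fun_prop) (hg.mono (by rintro _ ⟨u, -, rfl⟩; exact exp_pos _))
  simp only [sub_self, exp_zero, sub_zero, Function.comp_apply, mul_neg,
    intervalIntegral.integral_neg] at hsub
  rw [← hsub, intervalIntegral.integral_symm, neg_neg]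

lemma integrand_comp_exp_sub (θ r c : ℝ) (hθ : θ ≠ 0) (k : ℕ) (L u : ℝ) :
    exp L ^ r * (exp (L - u) ^ (1 - r) * (θ * exp (L - u) ^ (θ - 1) * exp L ^ (-θ)
        * log (exp (L - u) / exp L) ^ k * (log (exp (L - u) / exp L) + c / θ)) ^ 2
        * exp (L - u))
      = u ^ (2 * k) * (θ * u - c) ^ 2 * exp (-((2 * θ - r) * u)) := by
  have hexp : exp (-((2 * θ - r) * u)) = exp (L * r) * exp ((L - u) * (1 - r))
      * (exp ((L - u) * (θ - 1)) * exp (L * -θ)) ^ 2 * exp (L - u) := by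
    simp only [sq, ← exp_add]
    ring_nf
  have hpow : ((-u) ^ k) ^ 2 = u ^ (2 * k) := by
    rw [← pow_mul, mul_comm, Even.neg_pow ⟨k, two_mul k⟩]
  rw [← exp_sub, log_exp, sub_sub_cancel_left, hexp]
  simp only [← exp_mul]
  rw [mul_pow, mul_pow, mul_pow, hpow]
  field_simp
  ring

lemma scaled_integral_eq_integral_exp_neg (θ r c : ℝ) (hθ : θ ≠ 0) (k : ℕ) {n : ℝ} (hn : 0 < n) :
    n ^ r * ∫ t in (1 : ℝ)..n, t ^ (1 - r) *
        (θ * t ^ (θ - 1) * n ^ (-θ) * log (t / n) ^ k * (log (t / n) + c / θ)) ^ 2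
      = ∫ u in (0 : ℝ)..log n, u ^ (2 * k) * (θ * u - c) ^ 2 * exp (-((2 * θ - r) * u)) := by
  obtain ⟨L, rfl⟩ : ∃ L, n = exp L := ⟨log n, (exp_log hn).symm⟩
  have hcont : ContinuousOn (fun t ↦ t ^ (1 - r) * (θ * t ^ (θ - 1) * exp L ^ (-θ)
      * log (t / exp L) ^ k * (log (t / exp L) + c / θ)) ^ 2) (Ioi 0) := by
    fun_prop (disch := intro t (ht : 0 < t); positivity)
  rw [log_exp, integral_one_exp_eq_integral_exp_sub hcont, ← intervalIntegral.integral_const_mul]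
  exact intervalIntegral.integral_congr fun u _ ↦ integrand_comp_exp_sub θ r c hθ k L u

lemma factorial_combination_eq_gamma_form {θ r : ℝ} (hr : r ≠ 0) (ha : 2 * θ - r ≠ 0) (k : ℕ) :
    θ ^ 2 * (2 * k + 2)! / (2 * θ - r) ^ (2 * k + 3)
        - 2 * θ * ((k + 1 : ℕ) : ℝ) * (2 * k + 1)! / (2 * θ - r) ^ (2 * k + 2)
        + ((k + 1 : ℕ) : ℝ) ^ 2 * (2 * k)! / (2 * θ - r) ^ (2 * k + 1)
      = r ^ (-2 * ((k + 1 : ℕ) : ℤ) + 1) * (2 * θ / r - 1) ^ (-2 * ((k + 1 : ℕ) : ℤ) - 1)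
        * ((k + 1 : ℕ) : ℝ) * (((k + 1 : ℕ) : ℝ) + (2 / r) * (θ / r - 1) * θ)
        * Gamma (2 * ((k + 1 : ℕ) : ℝ) - 1) := by
  have hGamma : Gamma (2 * ((k + 1 : ℕ) : ℝ) - 1) = (2 * k)! := by
    rw [← Gamma_nat_eq_factorial]; push_cast; ring_nf
  have hr_zpow : r ^ (-2 * ((k + 1 : ℕ) : ℤ) + 1) = (r ^ (2 * k + 1))⁻¹ := by
    rw [← zpow_natCast, ← zpow_neg]; push_cast; ring_nf
  have hbase_zpow : (2 * θ / r - 1) ^ (-2 * ((k + 1 : ℕ) : ℤ) - 1)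
      = r ^ (2 * k + 3) / (2 * θ - r) ^ (2 * k + 3) := by
    rw [show 2 * θ / r - 1 = (2 * θ - r) / r by field_simp,
      show -2 * ((k + 1 : ℕ) : ℤ) - 1 = -((2 * k + 3 : ℕ) : ℤ) by push_cast; ring,
      zpow_neg, zpow_natCast, div_pow, inv_div]
  -- `field_simp` normalizes `2 * θ - r` to `θ * 2 - r` before looking for this side condition
  have ha' : θ * 2 - r ≠ 0 := by rwa [mul_comm]
  rw [hGamma, hr_zpow, hbase_zpow, Nat.factorial_succ, Nat.factorial_succ]
  push_cast
  field_simp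
  ring

/-- Limit of the scaled integral of the squared `m`-th θ-derivative of
`f_{t,n}(θ) = θ t^{θ-1} n^{-θ}`:
`n^r ∫_1^n t^{1-r} [d^m f/dθ^m]² dt → r^{-2m+1}(2θ/r-1)^{-2m-1} m (m + (2/r)(θ/r-1)θ) Γ(2m-1)`. -/
theorem stmt_4 (θ r : ℝ) (hr : r = 1 ∨ r = 2) (hθ : 1 < 2 * θ / r)
    (m : ℕ) (hm : 1 ≤ m) :
    Tendsto
      (fun n : ℝ => n ^ r * ∫ t in (1:ℝ)..n, t ^ (1 - r) *
        (θ * t ^ (θ - 1) * n ^ (-θ) * Real.log (t / n) ^ (m - 1)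
          * (Real.log (t / n) + (m : ℝ) / θ)) ^ 2)
      atTop
      (nhds (r ^ (-2 * (m : ℤ) + 1) * (2 * θ / r - 1) ^ (-2 * (m : ℤ) - 1)
        * m * ((m : ℝ) + (2 / r) * (θ / r - 1) * θ) * Real.Gamma (2 * (m : ℝ) - 1))) := by
  obtain ⟨k, rfl⟩ : ∃ k, m = k + 1 := ⟨m - 1, by omega⟩
  have hr0 : 0 < r := by rcases hr with rfl | rfl <;> norm_num
  have ha : 0 < 2 * θ - r := by linarith [(one_lt_div hr0).mp hθ]
  have hθ0 : 0 < θ := by linarith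
  rw [← factorial_combination_eq_gamma_form hr0.ne' ha.ne' k,
    ← integral_pow_mul_sq_mul_exp_neg_mul_Ioi (2 * k) θ _ ha]
  refine (intervalIntegral_tendsto_integral_Ioi 0
    (integrableOn_pow_mul_sq_mul_exp_neg_mul _ θ _ ha) tendsto_log_atTop).congr' ?_
  filter_upwards [eventually_gt_atTop 0] with n hn
  rw [Nat.add_sub_cancel, scaled_integral_eq_integral_exp_neg θ r _ hθ0.ne' k hn]
end

section
/- Define D(θ,θ₀) := (θ−θ₀)² · (σ_a/θ₀)² · [(2(1−β₀)θ₀ − 1)θ − ((1−β₀)θ₀ − 1)] / [(2θ − 1)(θ₀(1−β₀) + θ − 1)], with σ_a² := σ_ε²θ₀²/(2(1−β₀)θ₀ − 1) > 0. Under the conditions 1 < θ̲ ≤ θ ≤ θ̄, θ₀ ∈ (θ̲, θ̄), and θ₀(1−β₀) > 1/2 with β₀ < 1, the function θ ↦ D(θ,θ₀) is continuous on [θ̲, θ̄], nonnegative, and θ₀ is its unique minimizer (with minimum value 0). -/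
open Set

/-- The factor multiplying `(θ - θ₀) ^ 2` in `D(θ, θ₀)`, written with `c = (1 - β₀) θ₀` and
`κ = (σ_a / θ₀) ^ 2`. -/
noncomputable def criterionWeight (κ c θ : ℝ) : ℝ :=
  κ * ((2 * c - 1) * θ - (c - 1)) / ((2 * θ - 1) * (c + θ - 1))

section CriterionWeight

variable {κ c θ : ℝ}

theorem criterionWeight_numerator_pos (hc : 1 / 2 < c) (hθ : 1 ≤ θ) :
    0 < (2 * c - 1) * θ - (c - 1) := by
  nlinarith

theorem criterionWeight_denominator_pos (hc : 0 < c) (hθ : 1 ≤ θ) :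
    0 < (2 * θ - 1) * (c + θ - 1) :=
  mul_pos (by linarith) (by linarith)

theorem criterionWeight_pos (hκ : 0 < κ) (hc : 1 / 2 < c) (hθ : 1 ≤ θ) :
    0 < criterionWeight κ c θ :=
  div_pos (mul_pos hκ (criterionWeight_numerator_pos hc hθ))
    (criterionWeight_denominator_pos (by linarith) hθ)

theorem continuousOn_criterionWeight (hc : 0 < c) : ContinuousOn (criterionWeight κ c) (Ici 1) :=
  ContinuousOn.div (by fun_prop) (by fun_prop)
    fun _ hθ => (criterionWeight_denominator_pos hc hθ).ne'

end CriterionWeight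

theorem eq_of_sq_sub_mul_eq_zero {x a w : ℝ} (hw : w ≠ 0) (h : (x - a) ^ 2 * w = 0) : x = a := by
  simpa [hw, sub_eq_zero] using h

theorem stmt_8_general (σε β₀ θlo θhi θ₀ : ℝ) (hσε : 0 < σε)
    (hlo : 1 < θlo)
    (hgain : 1 / 2 < θ₀ * (1 - β₀))
    (D : ℝ → ℝ)
    (hD : D = fun θ => (θ - θ₀) ^ 2 * ((σε ^ 2 * θ₀ ^ 2 / (2 * (1 - β₀) * θ₀ - 1)) / θ₀ ^ 2)
      * ((2 * (1 - β₀) * θ₀ - 1) * θ - ((1 - β₀) * θ₀ - 1))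
      / ((2 * θ - 1) * (θ₀ * (1 - β₀) + θ - 1))) :
    ContinuousOn D (Icc θlo θhi)
    ∧ (∀ θ ∈ Icc θlo θhi, 0 ≤ D θ)
    ∧ D θ₀ = 0
    ∧ (∀ θ ∈ Icc θlo θhi, D θ = 0 → θ = θ₀) := by
  set κ := σε ^ 2 * θ₀ ^ 2 / (2 * (1 - β₀) * θ₀ - 1) / θ₀ ^ 2
  set c := (1 - β₀) * θ₀
  have hc : 1 / 2 < c := by linarith [mul_comm θ₀ (1 - β₀)]
  have hθ₀ : θ₀ ≠ 0 := by rintro rfl; norm_num at hgain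
  have hκ : 0 < κ := by
    have : 0 < 2 * (1 - β₀) * θ₀ - 1 := by linarith
    positivity
  have hD_weight : D = fun θ => (θ - θ₀) ^ 2 * criterionWeight κ c θ := by
    subst hD; funext θ; unfold criterionWeight; ring
  have hsub : Icc θlo θhi ⊆ Ici 1 := fun θ hθ => hlo.le.trans hθ.1
  have hw : ∀ θ ∈ Icc θlo θhi, 0 < criterionWeight κ c θ :=
    fun θ hθ => criterionWeight_pos hκ hc (hsub hθ)
  subst hD_weight
  refine ⟨?_, fun θ hθ => mul_nonneg (sq_nonneg _) (hw θ hθ).le, by simp,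
    fun θ hθ => eq_of_sq_sub_mul_eq_zero (hw θ hθ).ne'⟩
  exact ContinuousOn.mul (by fun_prop) ((continuousOn_criterionWeight (by linarith)).mono hsub)

/-- The identifying criterion `D(θ,θ₀)` is continuous on `[θ̲,θ̄]`, nonnegative,
vanishes at `θ₀`, and `θ₀` is its unique minimizer. -/
theorem stmt_8 (σε β₀ θlo θhi θ₀ : ℝ) (hσε : 0 < σε) (hβ₀ : β₀ < 1)
    (hlo : 1 < θlo) (hlohi : θlo < θhi) (hθ₀ : θ₀ ∈ Ioo θlo θhi)
    (hgain : 1 / 2 < θ₀ * (1 - β₀))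
    (D : ℝ → ℝ)
    (hD : D = fun θ => (θ - θ₀) ^ 2 * ((σε ^ 2 * θ₀ ^ 2 / (2 * (1 - β₀) * θ₀ - 1)) / θ₀ ^ 2)
      * ((2 * (1 - β₀) * θ₀ - 1) * θ - ((1 - β₀) * θ₀ - 1))
      / ((2 * θ - 1) * (θ₀ * (1 - β₀) + θ - 1))) :
    ContinuousOn D (Icc θlo θhi)
    ∧ (∀ θ ∈ Icc θlo θhi, 0 ≤ D θ)
    ∧ D θ₀ = 0
    ∧ (∀ θ ∈ Icc θlo θhi, D θ = 0 → θ = θ₀) :=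
  stmt_8_general σε β₀ θlo θhi θ₀ hσε hlo hgain D hD
end

section
/- Under Assumption A (1 < θ₀, θ₀(1−β₀) > 1/2, β₀ < 1), the quantity σ_ȧ² := (σ_a/θ₀)² · [θ₀(2−β₀) − 2θ₀²(1−β₀) − 1] / [(2θ₀ − 1)(1 − θ₀(2−β₀))] is strictly positive, where σ_a² := σ_ε²θ₀²/(2(1−β₀)θ₀ − 1) and σ_ε > 0. -/
section AssumptionA

variable {β₀ θ₀ : ℝ}

lemma two_mul_one_sub_mul_sub_one_pos (hgain : 1 / 2 < θ₀ * (1 - β₀)) :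
    0 < 2 * (1 - β₀) * θ₀ - 1 := by
  linarith

lemma sigmaDot_numerator_neg (hθ₀ : 1 < θ₀) (hgain : 1 / 2 < θ₀ * (1 - β₀)) :
    θ₀ * (2 - β₀) - 2 * θ₀ ^ 2 * (1 - β₀) - 1 < 0 := by
  have factor : θ₀ * (2 - β₀) - 2 * θ₀ ^ 2 * (1 - β₀) - 1
      = -((θ₀ - 1) * (2 * (1 - β₀) * θ₀ - 1)) - θ₀ * (1 - β₀) := by ring
  have hprod := mul_pos (sub_pos.2 hθ₀) (two_mul_one_sub_mul_sub_one_pos hgain)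
  linarith

lemma sigmaDot_denominator_neg (hθ₀ : 1 < θ₀) (hgain : 1 / 2 < θ₀ * (1 - β₀)) :
    (2 * θ₀ - 1) * (1 - θ₀ * (2 - β₀)) < 0 :=
  mul_neg_of_pos_of_neg (by linarith) (by linarith)

end AssumptionA

theorem stmt_9_general (σε β₀ θ₀ : ℝ) (hσε : 0 < σε) (hθ₀ : 1 < θ₀)
    (hgain : 1 / 2 < θ₀ * (1 - β₀)) :
    0 < ((σε ^ 2 * θ₀ ^ 2 / (2 * (1 - β₀) * θ₀ - 1)) / θ₀ ^ 2)
      * ((θ₀ * (2 - β₀) - 2 * θ₀ ^ 2 * (1 - β₀) - 1)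
        / ((2 * θ₀ - 1) * (1 - θ₀ * (2 - β₀)))) := by
  have hσa : 0 < σε ^ 2 * θ₀ ^ 2 / (2 * (1 - β₀) * θ₀ - 1) :=
    div_pos (by positivity) (two_mul_one_sub_mul_sub_one_pos hgain)
  exact mul_pos (div_pos hσa (by positivity))
    (div_pos_of_neg_of_neg (sigmaDot_numerator_neg hθ₀ hgain)
      (sigmaDot_denominator_neg hθ₀ hgain))

/-- Strict positivity of `σ_ȧ²` under Assumption A. -/
theorem stmt_9 (σε β₀ θ₀ : ℝ) (hσε : 0 < σε) (hθ₀ : 1 < θ₀) (hβ₀ : β₀ < 1)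
    (hgain : 1 / 2 < θ₀ * (1 - β₀)) :
    0 < ((σε ^ 2 * θ₀ ^ 2 / (2 * (1 - β₀) * θ₀ - 1)) / θ₀ ^ 2)
      * ((θ₀ * (2 - β₀) - 2 * θ₀ ^ 2 * (1 - β₀) - 1)
        / ((2 * θ₀ - 1) * (1 - θ₀ * (2 - β₀)))) :=
  stmt_9_general σε β₀ θ₀ hσε hθ₀ hgain
end

section
/- The 2×2 matrix K := [[σ_a², β₀σ_{aȧ}], [β₀σ_{aȧ}, β₀²σ_ȧ²]] with σ_{aȧ} := (σ_a/θ₀)² · θ₀(1 − (1−β₀)θ₀)/(1 − θ₀(2−β₀)), σ_ȧ² := (σ_a/θ₀)² · [θ₀(2−β₀) − 2θ₀²(1−β₀) − 1]/[(2θ₀−1)(1 − θ₀(2−β₀))], and σ_a² := σ_ε²θ₀²/(2(1−β₀)θ₀−1), is positive definite if and only if β₀ ≠ 0, under Assumption A (θ₀ > 1, β₀ < 1, θ₀(1−β₀) > 1/2, σ_ε > 0). -/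
/-!
A symmetric real `2 × 2` matrix is positive definite iff its top-left entry and its determinant
are positive. Here `σ_a² > 0` and `det K = β₀² (σ_a² σ_ȧ² - σ_{aȧ}²)`, where the bracket simplifies
to `σ_a⁴ (2(1 - β₀)θ₀ - 1) / ((2θ₀ - 1)(1 - θ₀(2 - β₀))²)`, which is positive under the assumptions.
-/

theorem Matrix.posDef_fin_two_iff {a b d : ℝ} :
    (!![a, b; b, d]).PosDef ↔ 0 < a ∧ 0 < a * d - b ^ 2 := by
  constructor
  · intro h
    refine ⟨by simpa using h.diag_pos (i := 0), ?_⟩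
    simpa [Matrix.det_fin_two_of, sq] using h.det_pos
  · rintro ⟨ha, hdet⟩
    refine Matrix.PosDef.of_dotProduct_mulVec_pos ?_ fun x hx => ?_
    · ext i j
      fin_cases i <;> fin_cases j <;> rfl
    simp only [Matrix.mulVec, dotProduct, Fin.sum_univ_two, Matrix.of_apply, Matrix.cons_val',
      Matrix.cons_val_zero, Matrix.cons_val_one, star_trivial]
    refine pos_of_mul_pos_right ?_ ha.le
    have hsq : a * (x 0 * (a * x 0 + b * x 1) + x 1 * (b * x 0 + d * x 1))
        = (a * x 0 + b * x 1) ^ 2 + (a * d - b ^ 2) * x 1 ^ 2 := by ring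
    rw [hsq]
    by_cases hx1 : x 1 = 0
    · have hx0 : x 0 ≠ 0 := fun hx0 => hx (funext fun i => by fin_cases i <;> simp [hx0, hx1])
      rw [hx1, mul_zero, add_zero, zero_pow two_ne_zero, mul_zero, add_zero]
      positivity
    · positivity

theorem sa2_mul_sd2_sub_sad_sq_eq (s β θ : ℝ) (hθ : θ ≠ 0) (h2θ : 2 * θ - 1 ≠ 0)
    (hB : 1 - θ * (2 - β) ≠ 0) :
    s * ((s / θ ^ 2) * ((θ * (2 - β) - 2 * θ ^ 2 * (1 - β) - 1)
      / ((2 * θ - 1) * (1 - θ * (2 - β)))))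
      - ((s / θ ^ 2) * (θ * (1 - (1 - β) * θ) / (1 - θ * (2 - β)))) ^ 2
      = s ^ 2 * (2 * (1 - β) * θ - 1) / ((2 * θ - 1) * (1 - θ * (2 - β)) ^ 2) := by
  -- `field_simp` only recognises the factor `2 * θ - 1` in the orientation `θ * 2 - 1`
  rw [mul_comm 2 θ] at h2θ ⊢
  field_simp
  ring

theorem stmt_11_general (σε β₀ θ₀ : ℝ) (hσε : 0 < σε) (hθ₀ : 1 < θ₀)
    (hgain : 1 / 2 < θ₀ * (1 - β₀))
    (sa2 sad sd2 : ℝ)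
    (hsa2 : sa2 = σε ^ 2 * θ₀ ^ 2 / (2 * (1 - β₀) * θ₀ - 1))
    (hsad : sad = (sa2 / θ₀ ^ 2) * (θ₀ * (1 - (1 - β₀) * θ₀) / (1 - θ₀ * (2 - β₀))))
    (hsd2 : sd2 = (sa2 / θ₀ ^ 2) * ((θ₀ * (2 - β₀) - 2 * θ₀ ^ 2 * (1 - β₀) - 1)
      / ((2 * θ₀ - 1) * (1 - θ₀ * (2 - β₀))))) :
    (Matrix.PosDef !![sa2, β₀ * sad; β₀ * sad, β₀ ^ 2 * sd2]) ↔ β₀ ≠ 0 := by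
  have hsa2_den : 0 < 2 * (1 - β₀) * θ₀ - 1 := by linarith
  have h2θ : 0 < 2 * θ₀ - 1 := by linarith
  have hB : 1 - θ₀ * (2 - β₀) < 0 := by nlinarith
  have hsa2_pos : 0 < sa2 := hsa2 ▸ div_pos (by positivity) hsa2_den
  have hdet : 0 < sa2 * sd2 - sad ^ 2 := by
    rw [hsad, hsd2, sa2_mul_sd2_sub_sad_sq_eq sa2 β₀ θ₀ (by positivity) h2θ.ne' hB.ne]
    exact div_pos (mul_pos (pow_pos hsa2_pos 2) hsa2_den) (mul_pos h2θ (sq_pos_of_neg hB))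
  rw [Matrix.posDef_fin_two_iff, and_iff_right hsa2_pos,
    show sa2 * (β₀ ^ 2 * sd2) - (β₀ * sad) ^ 2 = β₀ ^ 2 * (sa2 * sd2 - sad ^ 2) by ring,
    mul_pos_iff_of_pos_right hdet, sq_pos_iff]

/-- The limiting second-moment matrix `K` of the joint NLS gradient is positive
definite iff `β₀ ≠ 0`. -/
theorem stmt_11 (σε β₀ θ₀ : ℝ) (hσε : 0 < σε) (hθ₀ : 1 < θ₀) (hβ₀ : β₀ < 1)
    (hgain : 1 / 2 < θ₀ * (1 - β₀))
    (sa2 sad sd2 : ℝ)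
    (hsa2 : sa2 = σε ^ 2 * θ₀ ^ 2 / (2 * (1 - β₀) * θ₀ - 1))
    (hsad : sad = (sa2 / θ₀ ^ 2) * (θ₀ * (1 - (1 - β₀) * θ₀) / (1 - θ₀ * (2 - β₀))))
    (hsd2 : sd2 = (sa2 / θ₀ ^ 2) * ((θ₀ * (2 - β₀) - 2 * θ₀ ^ 2 * (1 - β₀) - 1)
      / ((2 * θ₀ - 1) * (1 - θ₀ * (2 - β₀))))) :
    (Matrix.PosDef !![sa2, β₀ * sad; β₀ * sad, β₀ ^ 2 * sd2]) ↔ β₀ ≠ 0 :=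
  stmt_11_general σε β₀ θ₀ hσε hθ₀ hgain sa2 sad sd2 hsa2 hsad hsd2
end

section
/- Define D₁(κ,κ₀) for κ = (β,θ), κ₀ = (β₀,θ₀) by D₁(κ,κ₀) := (2c₀θ₀ − 1)^{-1}·[β²θ₀² + (β₀²θ²/(2θ−1))·(2c₀θ₀ − 1 + 2θ₀β₀((1+c₀)θ₀ − 1)/(c₀θ₀ + θ − 1)) − 2ββ₀θθ₀(θ₀(1+c₀) − 1)/(c₀θ₀ + θ − 1)] with c₀ := 1 − β₀. Under Assumption A (θ, θ₀ ∈ (1, ∞), c₀θ₀ > 1/2, β₀ < 1, β < 1), D₁ is continuous and nonnegative in κ, D₁(κ₀,κ₀) = 0, and if β₀ = 0 then D₁((β,θ),(0,θ₀)) = β²θ₀²/(2c₀θ₀−1) = 0 for β = 0 regardless of the value of θ (identification failure at β₀ = 0). -/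
/-!
Clearing denominators, `(2c₀θ₀ − 1)·D₁` is a sum of two squares with nonnegative weights
over the positive denominator `(2θ − 1)(c₀θ₀ + θ − 1)²`, namely of
`β θ₀ (c₀θ₀ + θ − 1) − β₀ θ ((1 + c₀)θ₀ − 1)` and of `β₀ θ (θ − θ₀)`.
Both vanish at `(β₀, θ₀)`, while for `β₀ = 0` only the term `β²θ₀²` survives, so `θ` is
not identified.
-/

/-- The bracket in the definition of `D₁`, so that `D₁ = (2c₀θ₀ − 1)⁻¹ · limitBracket`. -/
noncomputable def limitBracket (β₀ θ₀ c₀ β θ : ℝ) : ℝ :=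
  β ^ 2 * θ₀ ^ 2
    + (β₀ ^ 2 * θ ^ 2 / (2 * θ - 1)) *
        (2 * c₀ * θ₀ - 1 + 2 * θ₀ * β₀ * ((1 + c₀) * θ₀ - 1) / (c₀ * θ₀ + θ - 1))
    - 2 * β * β₀ * θ * θ₀ * (θ₀ * (1 + c₀) - 1) / (c₀ * θ₀ + θ - 1)

section

variable {β₀ θ₀ c₀ : ℝ}

theorem limitBracket_eq_sum_sq (hc₀ : c₀ = 1 - β₀) {β θ : ℝ} (hθ : 2 * θ - 1 ≠ 0)
    (hs : c₀ * θ₀ + θ - 1 ≠ 0) :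
    limitBracket β₀ θ₀ c₀ β θ =
      ((2 * θ - 1) * (β * θ₀ * (c₀ * θ₀ + θ - 1) - β₀ * θ * ((1 + c₀) * θ₀ - 1)) ^ 2
          + (2 * c₀ * θ₀ - 1) * β₀ ^ 2 * θ ^ 2 * (θ - θ₀) ^ 2)
        / ((2 * θ - 1) * (c₀ * θ₀ + θ - 1) ^ 2) := by
  -- `field_simp` only finds the side conditions in its own normal form
  rw [mul_comm 2 θ] at hθ
  rw [mul_comm c₀ θ₀] at hs
  unfold limitBracket
  field_simp
  subst hc₀
  ring

theorem limitBracket_nonneg (hc₀ : c₀ = 1 - β₀) (hgain : 0 ≤ 2 * c₀ * θ₀ - 1) {β θ : ℝ}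
    (hθ : 1 / 2 < θ) (hs : 0 < c₀ * θ₀ + θ - 1) : 0 ≤ limitBracket β₀ θ₀ c₀ β θ := by
  have hθ' : 0 < 2 * θ - 1 := by linarith
  rw [limitBracket_eq_sum_sq hc₀ hθ'.ne' hs.ne']
  positivity

theorem limitBracket_self (hc₀ : c₀ = 1 - β₀) (hθ₀ : 2 * θ₀ - 1 ≠ 0)
    (hs : c₀ * θ₀ + θ₀ - 1 ≠ 0) : limitBracket β₀ θ₀ c₀ β₀ θ₀ = 0 := by
  rw [limitBracket_eq_sum_sq hc₀ hθ₀ hs]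
  have hfirst : β₀ * θ₀ * (c₀ * θ₀ + θ₀ - 1) - β₀ * θ₀ * ((1 + c₀) * θ₀ - 1) = 0 := by ring
  simp [hfirst]

theorem limitBracket_zero_left (β θ : ℝ) : limitBracket 0 θ₀ c₀ β θ = β ^ 2 * θ₀ ^ 2 := by
  simp [limitBracket]

theorem continuousOn_limitBracket :
    ContinuousOn (fun p : ℝ × ℝ => limitBracket β₀ θ₀ c₀ p.1 p.2)
      {p | 2 * p.2 - 1 ≠ 0 ∧ c₀ * θ₀ + p.2 - 1 ≠ 0} := by
  unfold limitBracket
  refine ContinuousOn.sub (ContinuousOn.add (by fun_prop) (ContinuousOn.mul ?_ ?_)) ?_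
  · exact ContinuousOn.div (by fun_prop) (by fun_prop) fun _ hp => hp.1
  · exact continuousOn_const.add (ContinuousOn.div (by fun_prop) (by fun_prop) fun _ hp => hp.2)
  · exact ContinuousOn.div (by fun_prop) (by fun_prop) fun _ hp => hp.2

end

theorem stmt_13_general (β₀ θ₀ c₀ : ℝ) (hc₀ : c₀ = 1 - β₀) (hθ₀ : 1 < θ₀)
    (hgain : 1 / 2 < c₀ * θ₀)
    (D₁ : ℝ × ℝ → ℝ)
    (hD₁ : ∀ β θ : ℝ, D₁ (β, θ) = (2 * c₀ * θ₀ - 1)⁻¹ *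
      (β ^ 2 * θ₀ ^ 2
        + (β₀ ^ 2 * θ ^ 2 / (2 * θ - 1)) *
            (2 * c₀ * θ₀ - 1 + 2 * θ₀ * β₀ * ((1 + c₀) * θ₀ - 1) / (c₀ * θ₀ + θ - 1))
        - 2 * β * β₀ * θ * θ₀ * (θ₀ * (1 + c₀) - 1) / (c₀ * θ₀ + θ - 1))) :
    ContinuousOn D₁ {p : ℝ × ℝ | p.1 < 1 ∧ 1 < p.2}
    ∧ (∀ β θ : ℝ, β < 1 → 1 < θ → 0 ≤ D₁ (β, θ))
    ∧ D₁ (β₀, θ₀) = 0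
    ∧ (β₀ = 0 → ∀ β θ : ℝ, D₁ (β, θ) = β ^ 2 * θ₀ ^ 2 / (2 * c₀ * θ₀ - 1)
        ∧ D₁ (0, θ) = 0) := by
  have hD : D₁ = fun p => (2 * c₀ * θ₀ - 1)⁻¹ * limitBracket β₀ θ₀ c₀ p.1 p.2 :=
    funext fun p => hD₁ p.1 p.2
  subst hD
  refine ⟨?_, ?_, ?_, ?_⟩
  · refine (continuousOn_const.mul continuousOn_limitBracket).mono fun p hp => ?_
    exact ⟨by linarith [hp.2], by linarith [hp.2]⟩
  · intro β θ _ hθ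
    exact mul_nonneg (inv_nonneg.2 (by linarith))
      (limitBracket_nonneg hc₀ (by linarith) (by linarith) (by linarith))
  · simp [limitBracket_self hc₀ (by linarith) (by linarith)]
  · rintro rfl β θ
    simp [limitBracket_zero_left, div_eq_inv_mul, mul_comm]

/-- Properties of the limit criterion `D₁(κ,κ₀)` for joint estimation: continuity
on `{β < 1, θ > 1}`, nonnegativity there, `D₁(κ₀,κ₀) = 0`, and identification
failure at `β₀ = 0`: in that case `D₁((β,θ)) = β²θ₀²/(2c₀θ₀-1)`, which is `0`
for `β = 0` regardless of `θ`. -/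
theorem stmt_13 (β₀ θ₀ c₀ : ℝ) (hc₀ : c₀ = 1 - β₀) (hθ₀ : 1 < θ₀) (hβ₀ : β₀ < 1)
    (hgain : 1 / 2 < c₀ * θ₀)
    (D₁ : ℝ × ℝ → ℝ)
    (hD₁ : ∀ β θ : ℝ, D₁ (β, θ) = (2 * c₀ * θ₀ - 1)⁻¹ *
      (β ^ 2 * θ₀ ^ 2
        + (β₀ ^ 2 * θ ^ 2 / (2 * θ - 1)) *
            (2 * c₀ * θ₀ - 1 + 2 * θ₀ * β₀ * ((1 + c₀) * θ₀ - 1) / (c₀ * θ₀ + θ - 1))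
        - 2 * β * β₀ * θ * θ₀ * (θ₀ * (1 + c₀) - 1) / (c₀ * θ₀ + θ - 1))) :
    ContinuousOn D₁ {p : ℝ × ℝ | p.1 < 1 ∧ 1 < p.2}
    ∧ (∀ β θ : ℝ, β < 1 → 1 < θ → 0 ≤ D₁ (β, θ))
    ∧ D₁ (β₀, θ₀) = 0
    ∧ (β₀ = 0 → ∀ β θ : ℝ, D₁ (β, θ) = β ^ 2 * θ₀ ^ 2 / (2 * c₀ * θ₀ - 1)
        ∧ D₁ (0, θ) = 0) :=
  stmt_13_general β₀ θ₀ c₀ hc₀ hθ₀ hgain D₁ hD₁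
end
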